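/- Let r > 0 and let M be the smallest positive integer greater than 1/(4r²) that is expressible as a sum of two squares of relatively prime positive integers. Then for any relatively prime positive integers p, q and any a ∈ (0,1) with pa ∉ ℤ such that the r-neighborhood of the orbit of γ(a, p/q) covers the unit square, we have p² + q² ≥ M; moreover p² + q² = M is achievable by choosing p, q with p² + q² = M and a = 1/(2p). -/

import Mathlib

/-!
`fold t` is the distance from `t` to `2ℤ`, a 1-Lipschitz function invariant under `t ↦ ±t + 2k`,
and the orbit of `γ(a, p/q)` is the image under `fold × fold` of the whole line `p x - q y = p a`.

Lower bound: choose `t ∈ {0, 1}` with `fold (p a - t) ≥ 1/2`. Every lift `(±t/p + 2k₁, 2k₂)` of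
the point `(t/p, 0)` then has `|p a - (p x - q y)| ≥ 1/2`, so by Cauchy–Schwarz it is at distance
at least `1 / (2√(p² + q²))` from the line, and so is `(t/p, 0)` from the orbit.

Upper bound (`a = 1/(2p)`): by Bézout every `z` in the square lifts to `(U, V)` with
`p U - q V = fold (p z₀ - q z₁) ∈ [0, 1]`, which is within `1/2` of `p a = 1/2`; the orthogonal
projection of `(U, V)` on the line is then within `1 / (2√(p² + q²))`, and folding does not
increase distances.
-/
open Set

/-- The folding map on one coordinate. -/
noncomputable def fold (t : ℝ) : ℝ := if Even ⌊t⌋ then Int.fract t else 1 - Int.fract t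

/-- A point of the Euclidean plane. -/
noncomputable def pt (x y : ℝ) : EuclideanSpace ℝ (Fin 2) := WithLp.toLp 2 ![x, y]

/-- The orbit of the billiard trajectory γ(a, p/q) in the unit square, obtained by folding
the unfolded ray `y = (p/q)(x - a), y ≥ 0` back into the square. -/
noncomputable def billiardOrbit (a : ℝ) (p q : ℕ) : Set (EuclideanSpace ℝ (Fin 2)) :=
  {z | ∃ x y : ℝ, 0 ≤ y ∧ y = ((p : ℝ) / q) * (x - a) ∧ z = pt (fold x) (fold y)}

/-- The unit square [0,1]² in the Euclidean plane. -/
def unitSquare : Set (EuclideanSpace ℝ (Fin 2)) :=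
  {z | z 0 ∈ Icc (0:ℝ) 1 ∧ z 1 ∈ Icc (0:ℝ) 1}

/-- Optimal covering radius of a set: the infimum of r > 0 whose open r-neighborhood
covers the unit square. -/
noncomputable def rcov (S : Set (EuclideanSpace ℝ (Fin 2))) : ℝ :=
  sInf {r : ℝ | 0 < r ∧ unitSquare ⊆ Metric.thickening r S}

lemma fold_nonneg (t : ℝ) : 0 ≤ fold t := by
  unfold fold
  split_ifs
  · exact Int.fract_nonneg t
  · linarith [Int.fract_lt_one t]

lemma fold_le_one (t : ℝ) : fold t ≤ 1 := by
  unfold fold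
  split_ifs
  · exact (Int.fract_lt_one t).le
  · linarith [Int.fract_nonneg t]

lemma fold_sub_one (t : ℝ) : fold (t - 1) = 1 - fold t := by
  unfold fold
  simp only [Int.floor_sub_one, Int.fract_sub_one, Int.even_sub_one]
  split_ifs <;> ring

lemma exists_fold_eq_abs_sub (t : ℝ) : ∃ k : ℤ, fold t = |t - 2 * k| := by
  have ht := Int.floor_add_fract t
  have hf0 := Int.fract_nonneg t
  have hf1 := Int.fract_lt_one t
  unfold fold
  split_ifs with h
  · obtain ⟨j, hj⟩ := h
    refine ⟨j, ?_⟩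
    rw [hj, Int.cast_add] at ht
    rw [abs_of_nonneg (by linarith)]
    linarith
  · obtain ⟨j, hj⟩ := Int.not_even_iff_odd.mp h
    refine ⟨j + 1, ?_⟩
    rw [hj] at ht
    push_cast at ht ⊢
    rw [abs_of_nonpos (by linarith)]
    linarith

lemma fold_le_abs_sub (t : ℝ) (k : ℤ) : fold t ≤ |t - 2 * k| := by
  obtain ⟨k₀, hk₀⟩ := exists_fold_eq_abs_sub t
  have hd : |t - 2 * k₀| ≤ 1 := hk₀ ▸ fold_le_one t
  rw [abs_le] at hd
  rw [hk₀]
  rcases lt_trichotomy k k₀ with h | rfl | h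
  · have : (k : ℝ) + 1 ≤ k₀ := by exact_mod_cast h
    rw [abs_of_nonneg (by linarith : 0 ≤ t - 2 * k)]
    exact abs_le.mpr ⟨by linarith, by linarith⟩
  · exact le_rfl
  · have : (k₀ : ℝ) + 1 ≤ k := by exact_mod_cast h
    rw [abs_of_nonpos (by linarith : t - 2 * k ≤ 0)]
    exact abs_le.mpr ⟨by linarith, by linarith⟩

lemma fold_le_fold_of {s t : ℝ} (h : ∀ k : ℤ, ∃ l : ℤ, |s - 2 * l| = |t - 2 * k|) :
    fold s ≤ fold t := by
  obtain ⟨k, hk⟩ := exists_fold_eq_abs_sub t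
  obtain ⟨l, hl⟩ := h k
  exact hk ▸ hl ▸ fold_le_abs_sub s l

lemma fold_add_two_mul (t : ℝ) (j : ℤ) : fold (t + 2 * j) = fold t :=
  le_antisymm (fold_le_fold_of fun k => ⟨k + j, by push_cast; ring_nf⟩)
    (fold_le_fold_of fun k => ⟨k - j, by push_cast; ring_nf⟩)

lemma fold_neg (t : ℝ) : fold (-t) = fold t := by
  have h : ∀ s : ℝ, fold (-s) ≤ fold s := fun s =>
    fold_le_fold_of fun k => ⟨-k, by rw [← abs_neg]; push_cast; ring_nf⟩
  exact le_antisymm (h t) (by simpa using h (-t))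

lemma fold_mul_add_two_mul {ε : ℤ} (hε : ε = 1 ∨ ε = -1) (t : ℝ) (k : ℤ) :
    fold (ε * t + 2 * k) = fold t := by
  rcases hε with rfl | rfl <;> simp [fold_add_two_mul, fold_neg]

lemma fold_eq_self {u : ℝ} (hu : u ∈ Icc (0 : ℝ) 1) : fold u = u := by
  have h₁ := fold_le_abs_sub u 0
  have h₂ := fold_le_abs_sub (u - 1) 0
  rw [fold_sub_one] at h₂
  simp only [Int.cast_zero, mul_zero, sub_zero] at h₁ h₂
  rw [abs_of_nonneg hu.1] at h₁
  rw [abs_of_nonpos (by linarith [hu.2])] at h₂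
  linarith

lemma abs_fold_sub_fold_le (s t : ℝ) : |fold s - fold t| ≤ |s - t| := by
  have h : ∀ s t : ℝ, fold s - fold t ≤ |s - t| := fun s t => by
    obtain ⟨k, hk⟩ := exists_fold_eq_abs_sub t
    linarith [fold_le_abs_sub s k, abs_sub_le s t (2 * k)]
  exact abs_sub_le_iff.mpr ⟨h s t, abs_sub_comm s t ▸ h t s⟩

lemma exists_eq_mul_fold_add (t : ℝ) :
    ∃ ε k : ℤ, (ε = 1 ∨ ε = -1) ∧ t = ε * fold t + 2 * k := by
  obtain ⟨k, hk⟩ := exists_fold_eq_abs_sub t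
  rcases le_total 0 (t - 2 * k) with h | h
  · exact ⟨1, k, Or.inl rfl, by rw [hk, abs_of_nonneg h]; push_cast; ring⟩
  · exact ⟨-1, k, Or.inr rfl, by rw [hk, abs_of_nonpos h]; push_cast; ring⟩

lemma exists_fold_eq_mul_add (t : ℝ) :
    ∃ ε k : ℤ, (ε = 1 ∨ ε = -1) ∧ fold t = ε * t + 2 * k := by
  obtain ⟨ε, k, hε, hk⟩ := exists_eq_mul_fold_add t
  rcases hε with rfl | rfl
  · exact ⟨1, -k, Or.inl rfl, by push_cast at hk ⊢; linarith⟩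
  · exact ⟨-1, k, Or.inr rfl, by push_cast at hk ⊢; linarith⟩

@[simp] lemma pt_apply_zero (x y : ℝ) : pt x y 0 = x := rfl

@[simp] lemma pt_apply_one (x y : ℝ) : pt x y 1 = y := rfl

lemma pt_eta (z : EuclideanSpace ℝ (Fin 2)) : pt (z 0) (z 1) = z := by
  ext i
  fin_cases i <;> rfl

lemma dist_pt_pt (x y x' y' : ℝ) : dist (pt x y) (pt x' y') = √((x - x') ^ 2 + (y - y') ^ 2) := by
  simp [EuclideanSpace.dist_eq, Fin.sum_univ_two, Real.dist_eq, sq_abs]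

lemma dist_pt_fold_le (x y x' y' : ℝ) :
    dist (pt (fold x) (fold y)) (pt (fold x') (fold y')) ≤ dist (pt x y) (pt x' y') := by
  rw [dist_pt_pt, dist_pt_pt]
  gcongr √(?_ + ?_) <;> exact sq_le_sq.mpr (abs_fold_sub_fold_le _ _)

lemma abs_mul_sub_mul_le (p q a b : ℝ) :
    |p * a - q * b| ≤ √(p ^ 2 + q ^ 2) * √(a ^ 2 + b ^ 2) := by
  rw [← Real.sqrt_mul (by positivity)]
  exact Real.abs_le_sqrt (by nlinarith [sq_nonneg (p * b + q * a)])

lemma mem_billiardOrbit_iff {a : ℝ} {p q : ℕ} (hp : 0 < p) (hq : 0 < q)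
    (z : EuclideanSpace ℝ (Fin 2)) :
    z ∈ billiardOrbit a p q ↔ ∃ x y : ℝ, p * x - q * y = p * a ∧ z = pt (fold x) (fold y) := by
  have hq' : (q : ℝ) ≠ 0 := by positivity
  constructor
  · rintro ⟨x, y, -, hy, rfl⟩
    exact ⟨x, y, by rw [hy]; field_simp; ring, rfl⟩
  · rintro ⟨x, y, hxy, rfl⟩
    -- translate along the period vector (2q, 2p) of the line until y ≥ 0
    set L : ℕ := ⌈-y⌉₊
    have hL : -y ≤ 2 * p * L := by
      have : (1 : ℝ) ≤ p := by exact_mod_cast hp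
      nlinarith [Nat.le_ceil (-y), (Nat.cast_nonneg L : (0 : ℝ) ≤ L)]
    refine ⟨x + 2 * (q * L : ℕ), y + 2 * (p * L : ℕ), by push_cast; linarith, ?_, ?_⟩
    · field_simp
      push_cast
      linear_combination -hxy
    · rw [← Int.cast_natCast (q * L), ← Int.cast_natCast (p * L), fold_add_two_mul,
        fold_add_two_mul]

lemma one_div_four_mul_sq_lt_iff {r N : ℝ} (hr : 0 < r) :
    1 / (4 * r ^ 2) < N ↔ 1 / 2 < √N * r := by
  rw [← div_lt_iff₀ hr, Real.lt_sqrt (by positivity), div_pow, div_pow]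
  ring_nf

lemma exists_mem_billiardOrbit_dist_le {p q : ℕ} (hp : 0 < p) (hq : 0 < q) (a U V : ℝ) :
    ∃ w ∈ billiardOrbit a p q,
      dist (pt (fold U) (fold V)) w ≤ |p * U - q * V - p * a| / √(p ^ 2 + q ^ 2) := by
  set N : ℝ := p ^ 2 + q ^ 2
  have hN : 0 < N := by positivity
  set c := p * U - q * V - p * a
  -- project (U, V) orthogonally onto the line p x - q y = p a
  set D := c / N
  refine ⟨pt (fold (U - D * p)) (fold (V + D * q)),
    (mem_billiardOrbit_iff hp hq _).2 ⟨_, _, by simp only [D, c, N]; field_simp; ring, rfl⟩, ?_⟩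
  calc dist (pt (fold U) (fold V)) (pt (fold (U - D * p)) (fold (V + D * q)))
      ≤ dist (pt U V) (pt (U - D * p) (V + D * q)) := dist_pt_fold_le _ _ _ _
    _ = √(c ^ 2 / N) := by rw [dist_pt_pt]; congr 1; simp only [D, N]; field_simp; ring
    _ = |c| / √N := by rw [Real.sqrt_div (sq_nonneg c), Real.sqrt_sq_eq_abs]

lemma fold_sub_le_sqrt_mul_dist {a : ℝ} {p q : ℕ} (hp : 0 < p) (hq : 0 < q)
    {z : EuclideanSpace ℝ (Fin 2)} (hz : z ∈ billiardOrbit a p q) (t : ℤ) :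
    fold (p * a - t) ≤ √(p ^ 2 + q ^ 2) * dist z (pt (t / p) 0) := by
  have hp' : (p : ℝ) ≠ 0 := by positivity
  obtain ⟨x, y, hxy, rfl⟩ := (mem_billiardOrbit_iff hp hq z).1 hz
  obtain ⟨ε₁, k₁, hε₁, hx⟩ := exists_eq_mul_fold_add x
  obtain ⟨ε₂, k₂, hε₂, hy⟩ := exists_eq_mul_fold_add y
  -- (ε₁ t / p + 2 k₁, 2 k₂) lies over pt (t / p) 0 exactly as (x, y) lies over z
  set x' : ℝ := ε₁ * (t / p) + 2 * k₁
  set y' : ℝ := 2 * k₂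
  have hdist : dist (pt (fold x) (fold y)) (pt (t / p) 0) = √((x - x') ^ 2 + (y - y') ^ 2) := by
    have h₁ : x - x' = ε₁ * (fold x - t / p) := by simp only [x']; linear_combination hx
    have h₂ : y - y' = ε₂ * (fold y - 0) := by linear_combination hy
    rw [dist_pt_pt, h₁, h₂]
    rcases hε₁ with rfl | rfl <;> rcases hε₂ with rfl | rfl <;> push_cast <;> ring_nf
  have hsign : fold (p * a - ε₁ * t) = fold (p * a - t) := by
    rcases hε₁ with rfl | rfl
    · simp
    · rw [show p * a - ((-1 : ℤ) : ℝ) * t = p * a - t + 2 * t by push_cast; ring, fold_add_two_mul]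
  calc fold (p * a - t) = fold (p * a - ε₁ * t) := hsign.symm
    _ ≤ |p * a - ε₁ * t - 2 * (p * k₁ - q * k₂ : ℤ)| := fold_le_abs_sub _ _
    _ = |p * (x - x') - q * (y - y')| := by
      congr 1
      simp only [x', y']
      push_cast
      field_simp
      linear_combination -hxy
    _ ≤ √(p ^ 2 + q ^ 2) * √((x - x') ^ 2 + (y - y') ^ 2) := abs_mul_sub_mul_le _ _ _ _
    _ = √(p ^ 2 + q ^ 2) * dist (pt (fold x) (fold y)) (pt (t / p) 0) := by rw [hdist]

lemma one_div_four_mul_sq_lt_of_unitSquare_subset {a r : ℝ} {p q : ℕ} (hp : 0 < p) (hq : 0 < q)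
    (hcov : unitSquare ⊆ Metric.thickening r (billiardOrbit a p q)) :
    1 / (4 * r ^ 2) < p ^ 2 + q ^ 2 := by
  have hp' : (1 : ℝ) ≤ p := by exact_mod_cast hp
  obtain ⟨t, ht, hhalf⟩ : ∃ t : ℤ, (t = 0 ∨ t = 1) ∧ 1 / 2 ≤ fold (p * a - t) := by
    rcases le_total (1 / 2) (fold (p * a)) with h | h
    · exact ⟨0, Or.inl rfl, by simpa using h⟩
    · exact ⟨1, Or.inr rfl, by rw [Int.cast_one, fold_sub_one]; linarith⟩
  have hw : pt (t / p) 0 ∈ unitSquare := by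
    refine ⟨⟨?_, ?_⟩, by simp⟩ <;> rcases ht with rfl | rfl <;> simp
    exact inv_le_one_of_one_le₀ hp'
  obtain ⟨z, hz, hwz⟩ := Metric.mem_thickening_iff.1 (hcov hw)
  rw [dist_comm] at hwz
  have hN : 0 < √((p : ℝ) ^ 2 + q ^ 2) := by positivity
  have h : 1 / 2 < √((p : ℝ) ^ 2 + q ^ 2) * r :=
    hhalf.trans_lt ((fold_sub_le_sqrt_mul_dist hp hq hz t).trans_lt
      (mul_lt_mul_of_pos_left hwz hN))
  have hr : 0 < r := pos_of_mul_pos_right (by linarith) hN.le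
  exact (one_div_four_mul_sq_lt_iff hr).2 h

lemma unitSquare_subset_thickening_of_one_div_four_mul_sq_lt {r : ℝ} {p q : ℕ} (hp : 0 < p)
    (hq : 0 < q) (hcop : Nat.Coprime p q) (hr : 0 < r) (h : 1 / (4 * r ^ 2) < p ^ 2 + q ^ 2) :
    unitSquare ⊆ Metric.thickening r (billiardOrbit (1 / (2 * (p : ℝ))) p q) := by
  rintro z ⟨hz₀, hz₁⟩
  obtain ⟨ε, k, hε, hk⟩ := exists_fold_eq_mul_add (p * z 0 - q * z 1)
  obtain ⟨u, v, huv⟩ := Nat.isCoprime_iff_coprime.2 hcop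
  set U : ℝ := ε * z 0 + 2 * (u * k : ℤ)
  set V : ℝ := ε * z 1 + 2 * (-v * k : ℤ)
  have hUV : p * U - q * V = fold (p * z 0 - q * z 1) := by
    have huv' : (u : ℝ) * p + v * q = 1 := by exact_mod_cast huv
    rw [hk]
    push_cast [U, V]
    linear_combination (2 * k : ℝ) * huv'
  obtain ⟨w, hw, hdist⟩ := exists_mem_billiardOrbit_dist_le hp hq (1 / (2 * p)) U V
  rw [fold_mul_add_two_mul hε, fold_mul_add_two_mul hε, fold_eq_self hz₀, fold_eq_self hz₁,
    pt_eta] at hdist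
  have hc : |p * U - q * V - p * (1 / (2 * p))| ≤ 1 / 2 := by
    have hp' : (p : ℝ) ≠ 0 := by positivity
    rw [hUV, mul_one_div, div_mul_cancel_right₀ hp', abs_le]
    constructor <;> linarith [fold_nonneg (p * z 0 - q * z 1), fold_le_one (p * z 0 - q * z 1)]
  have hN : 0 < √((p : ℝ) ^ 2 + q ^ 2) := by positivity
  refine Metric.mem_thickening_iff.2 ⟨w, hw, hdist.trans_lt ?_⟩
  rw [div_lt_iff₀ hN]
  linarith [(one_div_four_mul_sq_lt_iff hr).1 h]

theorem stmt12 (r : ℝ) (hr : 0 < r) (M : ℕ)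
    (hM : IsLeast {n : ℕ | 0 < n ∧ 1 / (4 * r ^ 2) < (n : ℝ) ∧
      ∃ p q : ℕ, 0 < p ∧ 0 < q ∧ Nat.Coprime p q ∧ n = p ^ 2 + q ^ 2} M) :
    (∀ p q : ℕ, 0 < p → 0 < q → Nat.Coprime p q →
      ∀ a : ℝ, a ∈ Set.Ioo (0:ℝ) 1 → (¬ ∃ m : ℤ, (p : ℝ) * a = m) →
      unitSquare ⊆ Metric.thickening r (billiardOrbit a p q) → M ≤ p ^ 2 + q ^ 2) ∧
    ∃ p q : ℕ, 0 < p ∧ 0 < q ∧ Nat.Coprime p q ∧ p ^ 2 + q ^ 2 = M ∧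
      unitSquare ⊆ Metric.thickening r (billiardOrbit (1 / (2 * (p : ℝ))) p q) := by
  obtain ⟨⟨-, hMlt, p₀, q₀, hp₀, hq₀, hcop₀, rfl⟩, hMle⟩ := hM
  refine ⟨fun p q hp hq hcop a _ _ hcov => hMle ⟨by positivity, ?_, p, q, hp, hq, hcop, rfl⟩,
    p₀, q₀, hp₀, hq₀, hcop₀, rfl,
    unitSquare_subset_thickening_of_one_div_four_mul_sq_lt hp₀ hq₀ hcop₀ hr ?_⟩
  · exact_mod_cast one_div_four_mul_sq_lt_of_unitSquare_subset hp hq hcov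
  · exact_mod_cast hMlt
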